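/- arXiv:1710.10105 — 6 statements merged into one kernel-verified Lean document; each statement's English description precedes it below -/
import Mathlib

section
/- Let T be a string of length n over an ordered alphabet whose last symbol is a sentinel strictly smaller than all other symbols and occurring nowhere else. For i < n, let j be the smallest position with i < j ≤ n such that the suffix T[j..n] is lexicographically smaller than T[i..n]. Then the substring T[i..j-1] is a Lyndon word. -/
/-!
Write `T[i..] = w ++ s` with `s = T[j..]`. Then `s < w ++ s`, and minimality of `j` says
`w ++ s ≤ v ++ s` for every proper nonempty suffix `v` of `w`. Given `w = u ++ v`, if `v` is not
a prefix of `w` then `w ++ s < v ++ s` is decided inside `w`, so `w < v ++ u`. If `w = v ++ u'`,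
cancelling `v` gives `u' ++ s < s < w ++ s`, contradicting the bound for the suffix `u'`.
-/

/-- A nonempty string is a Lyndon word if it is lexicographically strictly smaller
than all of its proper rotations: for every factorization `w = u ++ v` with `u, v`
nonempty, `w < v ++ u`. -/
def IsLyndon {α : Type*} [LinearOrder α] (w : List α) : Prop :=
  w ≠ [] ∧ ∀ u v : List α, w = u ++ v → u ≠ [] → v ≠ [] → w < v ++ u

namespace List

variable {α : Type*} [LinearOrder α]

theorem lt_of_append_lt_append_left {a x y : List α} (h : a ++ x < a ++ y) : x < y := by
  induction a with
  | nil => exact h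
  | cons c a ih => exact ih (lex_cons_iff.1 h)

/-- Since `y` is not a prefix of `x`, the comparison of `x ++ s` with `y ++ s` is decided
at a position inside `x`, where `s` plays no role. -/
theorem lt_append_of_append_lt_append_right {x y s : List α} (h : x ++ s < y ++ s)
    (hxy : ¬ y <+: x) (t : List α) : x < y ++ t := by
  induction x generalizing y with
  | nil =>
    cases y with
    | nil => exact absurd nil_prefix hxy
    | cons b y => exact nil_lt_cons b (y ++ t)
  | cons a x ih =>
    cases y with
    | nil => exact absurd nil_prefix hxy
    | cons b y =>
      rcases lt_trichotomy a b with hab | rfl | hab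
      · exact Lex.rel hab
      · exact Lex.cons (ih (lex_cons_iff.1 h) fun hyx => hxy (cons_prefix_cons.2 ⟨rfl, hyx⟩))
      · exact absurd h (not_lt.2 (le_of_lt (Lex.rel hab)))

end List

open List

theorem isLyndon_of_lt_append_of_append_le_suffix_append {α : Type*} [LinearOrder α]
    {w s : List α} (hs : s < w ++ s)
    (hsuffix : ∀ u v, w = u ++ v → u ≠ [] → v ≠ [] → w ++ s ≤ v ++ s) : IsLyndon w := by
  refine ⟨by rintro rfl; exact List.lt_irrefl s hs, fun u v huv hu hv => ?_⟩
  have hlt : w ++ s < v ++ s := (hsuffix u v huv hu hv).lt_of_ne fun he =>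
    hu (by simpa [huv] using congrArg length he)
  by_cases hvw : v <+: w
  · obtain ⟨u', rfl⟩ := hvw
    have hu' : u' ≠ [] := by
      rintro rfl
      exact hu (by simpa using congrArg length huv)
    have : u' ++ s < s := lt_of_append_lt_append_left (by simpa only [append_assoc] using hlt)
    exact absurd (hsuffix v u' rfl hv hu') (not_le.2 (this.trans hs))
  · rw [huv] at hlt ⊢
    exact lt_append_of_append_lt_append_right hlt (huv ▸ hvw) u

theorem lyndon_of_next_smaller_suffix_general {α : Type*} [LinearOrder α]
    (T : List α) (i j : ℕ)
    (hij : i < j)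
    (hj : T.drop j < T.drop i)
    (hmin : ∀ k, i < k → k < j → ¬ T.drop k < T.drop i) :
    IsLyndon ((T.drop i).take (j - i)) := by
  set w := (T.drop i).take (j - i)
  have hdecomp : T.drop i = w ++ T.drop j := by
    rw [← take_append_drop (j - i) (T.drop i), drop_drop, Nat.add_sub_cancel' hij.le]
  rw [hdecomp] at hj hmin
  refine isLyndon_of_lt_append_of_append_le_suffix_append hj fun u v huv hu hv => not_lt.1 ?_
  have hk : T.drop (i + u.length) = v ++ T.drop j := by
    rw [← drop_drop, hdecomp, huv, append_assoc, drop_left]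
  have hw : (u ++ v).length ≤ j - i := huv ▸ length_take_le _ _
  rw [length_append] at hw
  rw [← hk]
  have hu₀ := length_pos_iff.2 hu
  have hv₀ := length_pos_iff.2 hv
  exact hmin _ (by omega) (by omega)

/-- If `j` is the smallest position after `i` whose suffix is lexicographically
smaller than the suffix at `i`, then `T[i..j-1]` is a Lyndon word.
(0-indexed; the sentinel is `T[n-1]`, strictly smaller than every other symbol.) -/
theorem lyndon_of_next_smaller_suffix {α : Type*} [LinearOrder α] [Inhabited α]
    (T : List α) (n i j : ℕ) (hn : T.length = n)
    (hsent : ∀ k, k + 1 < n → T[n - 1]! < T[k]!)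
    (hij : i < j) (hjn : j < n)
    (hj : T.drop j < T.drop i)
    (hmin : ∀ k, i < k → k < j → ¬ T.drop k < T.drop i) :
    IsLyndon ((T.drop i).take (j - i)) :=
  lyndon_of_next_smaller_suffix_general T i j hij hj hmin
end

section
/- Let T be a string of length n with a unique minimal sentinel at position n. For i < n, let j be the smallest position with i < j ≤ n such that T[j..n] ≺ T[i..n] lexicographically. Then T[i..j] is not a Lyndon word; consequently T[i..j-1] is the longest Lyndon word starting at position i, i.e., the Lyndon array satisfies λ[i] = j - i. -/
namespace List

variable {α : Type*} [LinearOrder α]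

theorem append_lt_append_iff_of_length_eq :
    ∀ {a b : List α} (s t : List α), a.length = b.length →
      (a ++ s < b ++ t ↔ a < b ∨ a = b ∧ s < t)
  | [], [], s, t, _ => by simp
  | [], _ :: _, _, _, h | _ :: _, [], _, _, h => by simp at h
  | x :: a, y :: b, s, t, h => by
    simp only [cons_append, cons_lt_cons_iff,
      append_lt_append_iff_of_length_eq s t (by simpa using h), cons.injEq]
    tauto

theorem lt_of_take_lt_take {s t : List α} {e : ℕ} (hs : e ≤ s.length) (ht : e ≤ t.length)
    (h : s.take e < t.take e) : s < t := by
  rw [← take_append_drop e s, ← take_append_drop e t]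
  exact (append_lt_append_iff_of_length_eq _ _ (by simp; omega)).2 (.inl h)

theorem take_length_le_of_lt_append {x v w : List α} (hv : v.length ≤ x.length)
    (h : x < v ++ w) : x.take v.length ≤ v := by
  rw [← take_append_drop v.length x,
    append_lt_append_iff_of_length_eq _ _ (by simpa using hv)] at h
  rcases h with h | ⟨h, -⟩
  · exact h.le
  · exact h.le

end List

section

open List

variable {α : Type*} [LinearOrder α]

theorem IsLyndon.eq_nil_or_eq_of_prefix_of_suffix {w s : List α} (hw : IsLyndon w)
    (hpre : s <+: w) (hsuf : s <:+ w) : s = [] ∨ s = w := by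
  obtain ⟨u', rfl⟩ := hpre
  obtain ⟨u, hu⟩ := hsuf
  by_contra! ⟨hs, hsw⟩
  have hlen : u.length = u'.length := by
    have := congrArg length hu
    simp only [length_append] at this
    omega
  have hu_ne : u ≠ [] := by rintro rfl; simp_all
  have hu'_ne : u' ≠ [] := by rintro rfl; simp at hsw
  have h₁ : u' < u := by
    have h := hw.2 u s hu.symm hu_ne hs
    rwa [append_lt_append_iff_of_length_eq _ _ rfl, or_iff_right (lt_irrefl s),
      and_iff_right rfl] at h
  have h₂ : u < u' := by
    have h := hw.2 s u' rfl hs hu'_ne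
    rw [← hu, append_lt_append_iff_of_length_eq _ _ hlen] at h
    exact h.resolve_right fun h => lt_irrefl s h.2
  exact lt_asymm h₁ h₂

theorem isLyndon_take_of_forall_not_drop_lt {s : List α} {d : ℕ} (hd : 0 < d)
    (hlt : s.drop d < s) (hmin : ∀ p, 0 < p → p < d → ¬ s.drop p < s) :
    IsLyndon (s.take d) := by
  have hs : s ≠ [] := by rintro rfl; simp at hlt
  refine ⟨by simpa [hd.ne'] using hs, fun u v huv hu hv => ?_⟩
  have hlen : u.length + v.length = min d s.length := by
    simpa using (congrArg length huv).symm
  have hu0 := length_pos_iff.2 hu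
  have hv0 := length_pos_iff.2 hv
  have hdecomp : s = u ++ (v ++ s.drop d) := by
    rw [← append_assoc, ← huv, take_append_drop]
  have hdrop_u : s.drop u.length = v ++ s.drop d := by
    conv_lhs => rw [hdecomp]
    exact drop_left
  have hsu : s < v ++ s.drop d := by
    rw [← hdrop_u]
    refine lt_of_le_of_ne (not_lt.1 (hmin _ hu0 (by omega))) fun h => ?_
    have := congrArg length h
    simp only [length_drop] at this
    omega
  conv at hsu => lhs; rw [← take_append_drop v.length s]
  rw [append_lt_append_iff_of_length_eq _ _ (by simp; omega)] at hsu
  rcases hsu with hsu | ⟨-, hsu⟩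
  · refine lt_of_take_lt_take (e := v.length) (by simp; omega) (by simp) ?_
    rwa [take_take, min_eq_left (by omega), take_left]
  · exact (hmin _ hv0 (by omega) (hsu.trans hlt)).elim

theorem le_of_isLyndon_take {s : List α} {d m : ℕ} (hlt : s.drop d < s) (hm : m ≤ s.length)
    (hL : IsLyndon (s.take m)) : m ≤ d := by
  by_contra! hdm
  have hd : d ≠ 0 := by rintro rfl; exact lt_irrefl s hlt
  set x := s.take m with hx
  have hxlen : x.length = m := by simp [hx, hm]
  have hsuf_len : (x.drop d).length = m - d := by rw [length_drop, hxlen]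
  have hrot : x < x.drop d ++ x.take d := hL.2 _ _ (take_append_drop d x).symm
    (ne_nil_of_length_pos (by simp; omega)) (ne_nil_of_length_pos (by omega))
  have hle : x.take (m - d) ≤ x.drop d := hsuf_len ▸ take_length_le_of_lt_append (by omega) hrot
  have hne : x.take (m - d) ≠ x.drop d := fun h => by
    rcases hL.eq_nil_or_eq_of_prefix_of_suffix (h ▸ take_prefix _ x) (drop_suffix d x)
      with h' | h' <;> have := congrArg length h' <;> simp only [length_drop, length_nil] at this <;> omega
  have hpre : x.take (m - d) = s.take (m - d) := by rw [hx, take_take, min_eq_left (by omega)]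
  have hsuf : x.drop d = (s.drop d).take (m - d) := by rw [hx, drop_take]
  have hcon : s.take (m - d) < (s.drop d).take (m - d) := hpre ▸ hsuf ▸ lt_of_le_of_ne hle hne
  exact lt_asymm hlt (lt_of_take_lt_take (by omega) (by simp; omega) hcon)

end

theorem lyndonArray_eq_next_smaller_general {α : Type*} [LinearOrder α]
    (T : List α) (n i j : ℕ) (hn : T.length = n)
    (hij : i < j) (hjn : j < n)
    (hj : T.drop j < T.drop i)
    (hmin : ∀ k, i < k → k < j → ¬ T.drop k < T.drop i) :
    ¬ IsLyndon ((T.drop i).take (j - i + 1)) ∧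
    IsLyndon ((T.drop i).take (j - i)) ∧
    (∀ m ≤ n - i, IsLyndon ((T.drop i).take m) → m ≤ j - i) := by
  have hlen : (T.drop i).length = n - i := by simp [hn]
  have hlt : (T.drop i).drop (j - i) < T.drop i := by
    rwa [List.drop_drop, Nat.add_sub_cancel' hij.le]
  refine ⟨fun hL => ?_, ?_, fun m hm => le_of_isLyndon_take hlt (hlen ▸ hm)⟩
  · have := le_of_isLyndon_take hlt (by omega) hL
    omega
  · refine isLyndon_take_of_forall_not_drop_lt (by omega) hlt fun p hp hpd => ?_
    rw [List.drop_drop]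
    exact hmin _ (by omega) (by omega)

/-- With `j` the smallest position after `i` whose suffix is smaller than the
suffix at `i`: `T[i..j]` is not a Lyndon word, `T[i..j-1]` is a Lyndon word,
and it is the longest Lyndon word starting at `i`; i.e. the Lyndon array
satisfies `λ[i] = j - i`. (0-indexed.) -/
theorem lyndonArray_eq_next_smaller {α : Type*} [LinearOrder α] [Inhabited α]
    (T : List α) (n i j : ℕ) (hn : T.length = n)
    (hsent : ∀ k, k + 1 < n → T[n - 1]! < T[k]!)
    (hij : i < j) (hjn : j < n)
    (hj : T.drop j < T.drop i)
    (hmin : ∀ k, i < k → k < j → ¬ T.drop k < T.drop i) :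
    ¬ IsLyndon ((T.drop i).take (j - i + 1)) ∧
    IsLyndon ((T.drop i).take (j - i)) ∧
    (∀ m ≤ n - i, IsLyndon ((T.drop i).take m) → m ≤ j - i) :=
  lyndonArray_eq_next_smaller_general T n i j hn hij hjn hj hmin
end

section
/- Let T be a string of length n with unique minimal sentinel at position n, and let λ be its Lyndon array. Then the intervals [i, i + λ[i] - 1] for 1 ≤ i ≤ n form a laminar family: for any i < j, either the intervals are disjoint (i + λ[i] - 1 < j) or the interval starting at j is contained in the one starting at i (j + λ[j] - 1 ≤ i + λ[i] - 1). Equivalently, the longest Lyndon words starting at distinct positions never properly overlap. -/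
/-- `lam` is the Lyndon array of `T` (0-indexed): `lam i` is the length of the
longest Lyndon word starting at position `i` of `T`. -/
def IsLyndonArray {α : Type*} [LinearOrder α] (T : List α) (lam : ℕ → ℕ) : Prop :=
  ∀ i < T.length,
    IsLyndon ((T.drop i).take (lam i)) ∧
    ∀ m ≤ T.length - i, IsLyndon ((T.drop i).take m) → m ≤ lam i

/-!
If the longest Lyndon words `ab` at `i` and `bc` at `j` properly overlapped (with `b` nonempty),
then `abc` would again be Lyndon, contradicting the maximality of `ab`. The sentinel guarantees
that no Lyndon factor starting before the last position reaches it (the first letter of a Lyndon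
word is its least letter), so the factors considered are genuine factors of `T`.
-/

namespace List

theorem take_drop_eq_append {α : Type*} {T : List α} {i j m : ℕ} (hij : i ≤ j)
    (hjm : j ≤ i + m) :
    (T.drop i).take m = (T.drop i).take (j - i) ++ (T.drop j).take (i + m - j) := by
  obtain ⟨k, rfl⟩ := Nat.exists_eq_add_of_le hij
  obtain ⟨l, rfl⟩ := Nat.exists_eq_add_of_le (show k ≤ m by omega)
  rw [take_add, drop_drop]
  congr 2 <;> omega

variable {α : Type*} [LT α]

theorem append_lt_append_of_lt_of_not_prefix {x y : List α} (h : x < y) (hp : ¬x <+: y)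
    (c d : List α) : x ++ c < y ++ d := by
  induction h with
  | nil => exact absurd nil_prefix hp
  | cons h ih => exact Lex.cons (ih fun hp' => hp (prefix_cons_inj _ |>.mpr hp'))
  | rel h => exact Lex.rel h

theorem append_lt_append_of_lt_of_length_le [Std.Irrefl (· < · : α → α → Prop)]
    {x y : List α} (h : x < y) (hlen : y.length ≤ x.length) (c d : List α) : x ++ c < y ++ d :=
  append_lt_append_of_lt_of_not_prefix h
    (fun hp => List.lt_irrefl y (hp.eq_of_length (le_antisymm hp.length_le hlen) ▸ h)) c d

theorem append_lt_append_left_iff [Std.Irrefl (· < · : α → α → Prop)] {s x y : List α} :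
    s ++ x < s ++ y ↔ x < y := by
  induction s with
  | nil => rfl
  | cons a s ih => simp [ih]

end List

section Lyndon

variable {α : Type*} [LinearOrder α] {w s : List α}

theorem IsLyndon.eq_of_isPrefix_of_isSuffix (hw : IsLyndon w) (hpre : s <+: w) (hsuf : s <:+ w)
    (hs : s ≠ []) : s = w := by
  obtain ⟨y, rfl⟩ := hpre
  obtain ⟨x, hx⟩ := hsuf
  by_contra hne
  have hy : y ≠ [] := by rintro rfl; simp at hne
  have hlen : x.length = y.length := by
    have := congrArg List.length hx
    simp only [List.length_append] at this
    omega
  have hx' : x ≠ [] := by rintro rfl; simp_all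
  have hyx : y < x := List.append_lt_append_left_iff.mp (hw.2 x s hx.symm hx' hs)
  have hys : y ++ s < s ++ y := by
    simpa [hx] using List.append_lt_append_of_lt_of_length_le hyx hlen.le s s
  exact lt_asymm hys (hw.2 s y rfl hs hy)

theorem IsLyndon.lt_of_eq_append {u : List α} (hw : IsLyndon w) (h : w = u ++ s) (hu : u ≠ [])
    (hs : s ≠ []) : w < s := by
  have hlen : s.length < w.length := by
    simpa [h] using List.length_pos_iff.mpr hu
  have hpre : ¬s <+: w := fun hpre =>
    hlen.ne (congrArg List.length (hw.eq_of_isPrefix_of_isSuffix hpre ⟨u, h.symm⟩ hs))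
  rcases lt_trichotomy w s with hws | rfl | hsw
  · exact hws
  · exact absurd (List.prefix_refl w) hpre
  · have := List.append_lt_append_of_lt_of_not_prefix hsw hpre u []
    rw [List.append_nil] at this
    exact absurd (hw.2 u s h hu hs) (lt_asymm this)

theorem isLyndon_iff_lt_of_eq_append :
    IsLyndon w ↔
      w ≠ [] ∧ ∀ u v : List α, w = u ++ v → u ≠ [] → v ≠ [] → w < v := by
  refine ⟨fun hw => ⟨hw.1, fun u v h hu hv => hw.lt_of_eq_append h hu hv⟩,
    fun ⟨hne, hlt⟩ => ⟨hne, fun u v h hu hv => ?_⟩⟩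
  have hlen : v.length ≤ w.length := by simp [h]
  simpa using List.append_lt_append_of_lt_of_length_le (hlt u v h hu hv) hlen [] u

theorem IsLyndon.getElem_zero_le (hw : IsLyndon w) {i : ℕ} (hi : i < w.length) :
    w[0] ≤ w[i] := by
  rcases Nat.eq_zero_or_pos i with rfl | hpos
  · exact le_rfl
  have hlt : w < w.drop i :=
    hw.lt_of_eq_append (w.take_append_drop i).symm
      (List.ne_nil_of_length_pos (by simp; omega)) (List.ne_nil_of_length_pos (by simp; omega))
  rw [List.drop_eq_getElem_cons hi] at hlt
  obtain ⟨a, t, rfl⟩ := List.exists_cons_of_ne_nil hw.1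
  exact List.head_le_of_lt hlt

theorem IsLyndon.append_of_overlap {a b c : List α} (hab : IsLyndon (a ++ b))
    (hbc : IsLyndon (b ++ c)) (hb : b ≠ []) : IsLyndon (a ++ b ++ c) := by
  -- A proper suffix of `abc` is either `tbc` with `t` a proper suffix of `a`, or one of `bc`.
  have hstep : ∀ u t, a = u ++ t → u ≠ [] → a ++ b ++ c < t ++ b ++ c := by
    intro u t h hu
    have hlt : a ++ b < t ++ b := hab.lt_of_eq_append (by simp [h]) hu (by simp [hb])
    exact List.append_lt_append_of_lt_of_length_le hlt (by simp [h]) c c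
  have hle : a ++ b ++ c ≤ b ++ c := by
    rcases eq_or_ne a [] with rfl | ha
    · simp
    · simpa using (hstep a [] (by simp) ha).le
  rw [isLyndon_iff_lt_of_eq_append]
  refine ⟨by simp [hb], fun u s h hu hs => ?_⟩
  rw [List.append_assoc] at h
  rcases List.append_eq_append_iff.mp h.symm with ⟨t, hat, rfl⟩ | ⟨t, rfl, hts⟩
  · simpa using hstep u t hat hu
  · rcases eq_or_ne t [] with rfl | ht
    · rw [List.nil_append] at hts
      subst hts
      simpa using hstep a [] (by simp) (by simpa using hu)
    · exact hle.trans_lt (hbc.lt_of_eq_append hts ht hs)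

theorem IsLyndon.add_le_of_getElem_lt {T : List α} {k m j : ℕ}
    (hw : IsLyndon ((T.drop k).take m)) (hkj : k ≤ j) (hj : j < T.length)
    (hlt : T[j] < T[k]'(hkj.trans_lt hj)) : k + m ≤ j := by
  by_contra! hjm
  have := hw.getElem_zero_le (i := j - k) (by simp; omega)
  simp only [List.getElem_take, List.getElem_drop, Nat.add_zero, Nat.add_sub_cancel' hkj] at this
  exact this.not_gt hlt

end Lyndon

theorem IsLyndonArray.laminar {α : Type*} [LinearOrder α] {T : List α} {lam : ℕ → ℕ}
    (hlam : IsLyndonArray T lam) {i j : ℕ} (hij : i < j) (hj : j < T.length)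
    (hjT : j + lam j ≤ T.length) : i + lam i ≤ j ∨ j + lam j ≤ i + lam i := by
  by_contra! ⟨hji, hij'⟩
  set a := (T.drop i).take (j - i)
  set b := (T.drop j).take (i + lam i - j)
  set c := (T.drop (i + lam i)).take (j + lam j - (i + lam i))
  have hb : b ≠ [] := List.ne_nil_of_length_pos (by simp [b]; omega)
  have hab : (T.drop i).take (lam i) = a ++ b := List.take_drop_eq_append hij.le hji.le
  have hbc : (T.drop j).take (lam j) = b ++ c := List.take_drop_eq_append hji.le hij'.le
  have habc : (T.drop i).take (j - i + lam j) = a ++ b ++ c := by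
    rw [List.take_drop_eq_append hij.le (by omega : j ≤ i + (j - i + lam j)), List.append_assoc,
      ← hbc]
    congr 3
    omega
  have hmerge : IsLyndon ((T.drop i).take (j - i + lam j)) :=
    habc ▸ (hab ▸ (hlam i (by omega)).1).append_of_overlap (hbc ▸ (hlam j hj).1) hb
  have := (hlam i (by omega)).2 _ (by omega) hmerge
  omega

theorem lyndonArray_laminar_general {α : Type*} [LinearOrder α] [Inhabited α]
    (T : List α) (n : ℕ) (hn : T.length = n)
    (hsent : ∀ k, k + 1 < n → T[n - 1]! < T[k]!)
    (lam : ℕ → ℕ) (hlam : IsLyndonArray T lam) :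
    ∀ i j : ℕ, i < j → j < n → i + lam i ≤ j ∨ j + lam j ≤ i + lam i := by
  intro i j hij hjn
  subst hn
  have hbound : ∀ k, k + 1 < T.length → k + lam k < T.length := fun k hk => by
    have hlast := hsent k hk
    rw [getElem!_pos T k (by omega), getElem!_pos T _ (by omega)] at hlast
    have := (hlam k (by omega)).1.add_le_of_getElem_lt (by omega) (by omega) hlast
    omega
  by_cases hj : j + 1 < T.length
  · exact hlam.laminar hij hjn (hbound j hj).le
  · have := hbound i (by omega)
    omega

/-- Longest Lyndon words starting at distinct positions never properly overlap:
the intervals `[i, i + λ[i] - 1]` form a laminar family. For `i < j` either the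
intervals are disjoint (`i + λ[i] ≤ j`) or the one starting at `j` is contained
in the one starting at `i` (`j + λ[j] ≤ i + λ[i]`). (0-indexed.) -/
theorem lyndonArray_laminar {α : Type*} [LinearOrder α] [Inhabited α]
    (T : List α) (n : ℕ) (hn : T.length = n) (hpos : 0 < n)
    (hsent : ∀ k, k + 1 < n → T[n - 1]! < T[k]!)
    (lam : ℕ → ℕ) (hlam : IsLyndonArray T lam) :
    ∀ i j : ℕ, i < j → j < n → i + lam i ≤ j ∨ j + lam j ≤ i + lam i :=
  lyndonArray_laminar_general T n hn hsent lam hlam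
end

section
/- Let A[1..n] be a permutation of {1,...,n} with A[n] = 1, and let S be the balanced parenthesis string of length 2n produced by the monotone-stack algorithm (pop all elements greater than A[i] emitting ')' per pop, then push A[i] emitting '(', finally pop the last element emitting ')'). Let o_i be the position in S of the i-th open parenthesis and c_i the position of its matching closed parenthesis. Then for all 1 ≤ i < n, (c_i − o_i + 1)/2 = NSV_A[i] − i, where NSV_A[i] = min({n+1} ∪ {j : i < j ≤ n, A[j] < A[i]}); and (c_n − o_n + 1)/2 = 1. -/
/-- Pop all stack elements greater than `x`, emitting a closed parenthesis
(`false`) for each popped element. The head of the list is the top of the stack. -/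
def popGT (x : ℕ) : List ℕ → List ℕ × List Bool
  | [] => ([], [])
  | y :: s =>
    if x < y then
      let p := popGT x s
      (p.1, false :: p.2)
    else (y :: s, [])

/-- Run the monotone-stack algorithm on `A 0, ..., A (i-1)`: for each element,
pop all stack elements greater than it (emitting `false` = ')' per pop), then
push it (emitting `true` = '('). Returns the final stack and the emitted output. -/
def runStack (A : ℕ → ℕ) : ℕ → List ℕ × List Bool
  | 0 => ([], [])
  | i + 1 =>
    let r := runStack A i
    let p := popGT (A i) r.1
    (A i :: p.1, r.2 ++ p.2 ++ [true])

/-- The balanced parenthesis string of length `2n` produced by the monotone-stack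
algorithm on `A[0..n-1]`: the output of the main loop followed by the final pop
of the remaining element (one closed parenthesis). `true` = '(' and `false` = ')'. -/
def bpString (A : ℕ → ℕ) (n : ℕ) : List Bool :=
  (runStack A n).2 ++ [false]

/-- Position (0-indexed) in `S` of the `(i+1)`-th open parenthesis (`true`). -/
noncomputable def openPos (S : List Bool) (i : ℕ) : ℕ :=
  sInf {p | p < S.length ∧ S.getD p false = true ∧ (S.take p).count true = i}

/-- Position in `S` of the closed parenthesis matching the `(i+1)`-th open
parenthesis: the smallest position `c > openPos S i` holding a closed parenthesis
such that the segment `S[openPos S i .. c]` has equally many open and closed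
parentheses. -/
noncomputable def closePos (S : List Bool) (i : ℕ) : ℕ :=
  sInf {c | openPos S i < c ∧ c < S.length ∧ S.getD c false = false ∧
    ((S.take (c + 1)).drop (openPos S i)).count true =
      ((S.take (c + 1)).drop (openPos S i)).count false}

/-!
The output after step `m` has `m` open and `m - |stack|` closed parentheses, so the excess of
`(` over `)` in every prefix is the current stack height, and inside the pops of step `m` it
decreases from the height before step `m` one by one. When `A i` is pushed the stack is
`A i :: r`. As long as the later values are `≥ A i`, the pops never reach `A i`, so the height
stays above `|r|`; the next smaller value `A p` pops `A i`, and the height returns to `|r|` in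
the middle of the pops of step `p`: that is the matching `)`. Step `m` ends at position
`2m - |stack|`, which turns the two positions into `2 (p - i)`.
-/

namespace MonotoneStack

def excess (l : List Bool) : ℤ := (l.count true : ℤ) - l.count false

@[simp] lemma excess_append (l₁ l₂ : List Bool) : excess (l₁ ++ l₂) = excess l₁ + excess l₂ := by
  simp only [excess, List.count_append]; push_cast; ring

@[simp] lemma excess_replicate_false (k : ℕ) : excess (List.replicate k false) = -k := by
  simp [excess, List.count_replicate]

@[simp] lemma excess_singleton_true : excess [true] = 1 := rfl

lemma count_drop_take_eq_iff (S : List Bool) {o x : ℕ} (h : o ≤ x) :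
    ((S.take x).drop o).count true = ((S.take x).drop o).count false ↔
      excess (S.take x) = excess (S.take o) := by
  have hsplit : S.take x = S.take o ++ (S.take x).drop o := by
    conv_lhs => rw [← List.take_append_drop o (S.take x)]
    rw [List.take_take, min_eq_left h]
  rw [show excess (S.take x) = excess (S.take o) + excess ((S.take x).drop o) by
    rw [← excess_append, ← hsplit]]
  simp only [excess]
  omega

lemma count_take_lt_of_getD_eq_true {S : List Bool} {q q' : ℕ} (hq : q < q')
    (hq' : q' ≤ S.length) (h : S.getD q false = true) :
    (S.take q).count true < (S.take q').count true := by
  have hsucc : S.take (q + 1) = S.take q ++ [true] := by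
    rw [List.take_add_one, List.getElem?_eq_getElem (by omega)]
    rw [List.getD_eq_getElem _ _ (by omega)] at h
    rw [h]; rfl
  have hle := ((List.take_prefix (q + 1) (S.take q')).sublist.count_le true)
  rw [List.take_take, min_eq_left (by omega), hsucc, List.count_append,
    List.count_singleton_self] at hle
  omega

lemma openPos_eq {S : List Bool} {i o : ℕ} (ho : o < S.length) (hget : S.getD o false = true)
    (hcount : (S.take o).count true = i) : openPos S i = o := by
  have hmem : o ∈ {p | p < S.length ∧ S.getD p false = true ∧ (S.take p).count true = i} :=
    ⟨ho, hget, hcount⟩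
  obtain ⟨hq, hqget, hqcount⟩ := Nat.sInf_mem ⟨o, hmem⟩
  rcases lt_trichotomy (openPos S i) o with hlt | heq | hgt
  · have := count_take_lt_of_getD_eq_true hlt ho.le hqget
    unfold openPos at hlt this; omega
  · exact heq
  · have := count_take_lt_of_getD_eq_true hgt hq.le hget
    unfold openPos at hgt this; omega

lemma closePos_eq {S : List Bool} {i c : ℕ} (hoc : openPos S i < c) (hc : c < S.length)
    (hget : S.getD c false = false)
    (hbal : excess (S.take (c + 1)) = excess (S.take (openPos S i)))
    (hfirst : ∀ x, openPos S i < x → x < c →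
      excess (S.take (x + 1)) ≠ excess (S.take (openPos S i))) :
    closePos S i = c := by
  have hmem : c ∈ {x | openPos S i < x ∧ x < S.length ∧ S.getD x false = false ∧
      ((S.take (x + 1)).drop (openPos S i)).count true =
        ((S.take (x + 1)).drop (openPos S i)).count false} :=
    ⟨hoc, hc, hget, (count_drop_take_eq_iff S (by omega)).2 hbal⟩
  obtain ⟨hx, -, -, hxbal⟩ := Nat.sInf_mem ⟨c, hmem⟩
  refine le_antisymm (Nat.sInf_le hmem) (not_lt.1 fun hlt => hfirst _ hx hlt ?_)
  exact (count_drop_take_eq_iff S (by omega)).1 hxbal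

lemma popGT_eq (x : ℕ) (s : List ℕ) :
    popGT x s = (s.dropWhile (fun y => x < y),
      List.replicate (s.takeWhile (fun y => x < y)).length false) := by
  induction s with
  | nil => rfl
  | cons y t ih =>
    by_cases h : x < y
    · simp [popGT, h, ih, List.replicate_succ]
    · simp [popGT, h]

section Stack

variable (A : ℕ → ℕ)

def popCount (m : ℕ) : ℕ := ((runStack A m).1.takeWhile (fun y => A m < y)).length

def prePush (m : ℕ) : List Bool := (runStack A m).2 ++ List.replicate (popCount A m) false

lemma runStack_fst_succ (m : ℕ) :
    (runStack A (m + 1)).1 = A m :: (runStack A m).1.dropWhile (fun y => A m < y) := by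
  simp [runStack, popGT_eq]

lemma runStack_snd_succ (m : ℕ) : (runStack A (m + 1)).2 = prePush A m ++ [true] := by
  simp [runStack, popGT_eq, prePush, popCount]

lemma length_dropWhile_add_popCount (m : ℕ) :
    ((runStack A m).1.dropWhile (fun y => A m < y)).length + popCount A m =
      (runStack A m).1.length := by
  rw [popCount, add_comm, ← List.length_append, List.takeWhile_append_dropWhile]

lemma length_prePush (m : ℕ) :
    (prePush A m).length = (runStack A m).2.length + popCount A m := by
  simp [prePush]

lemma length_runStack_snd_add (m : ℕ) :
    (runStack A m).2.length + (runStack A m).1.length = 2 * m := by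
  induction m with
  | zero => rfl
  | succ m ih =>
    have := length_dropWhile_add_popCount A m
    simp only [runStack_snd_succ, runStack_fst_succ, List.length_append, length_prePush,
      List.length_cons, List.length_nil]
    omega

lemma count_true_runStack_snd (m : ℕ) : (runStack A m).2.count true = m := by
  induction m with
  | zero => rfl
  | succ m ih => simp [runStack_snd_succ, prePush, ih, List.count_replicate]

lemma excess_runStack_snd (m : ℕ) : excess (runStack A m).2 = (runStack A m).1.length := by
  induction m with
  | zero => rfl
  | succ m ih =>
    have := length_dropWhile_add_popCount A m
    simp only [runStack_snd_succ, prePush, excess_append, ih, excess_replicate_false,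
      excess_singleton_true, runStack_fst_succ, List.length_cons]
    omega

lemma runStack_snd_prefix {m m' : ℕ} (h : m ≤ m') : (runStack A m).2 <+: (runStack A m').2 := by
  induction m', h using Nat.le_induction with
  | base => exact List.prefix_refl _
  | succ m' _ ih => exact ih.trans ⟨List.replicate (popCount A m') false ++ [true], by
      simp [runStack_snd_succ, prePush]⟩

lemma prePush_append_true_prefix_bpString {m n : ℕ} (h : m < n) :
    prePush A m ++ [true] <+: bpString A n :=
  (runStack_snd_succ A m ▸ runStack_snd_prefix A h).trans (List.prefix_append _ _)

lemma excess_take_bpString {m n x : ℕ} (hm : m < n) (hx₁ : (runStack A m).2.length ≤ x)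
    (hx₂ : x ≤ (prePush A m).length) :
    excess ((bpString A n).take x) = (runStack A m).1.length - (x - (runStack A m).2.length) := by
  obtain ⟨t, ht⟩ := prePush_append_true_prefix_bpString A hm
  rw [← ht, List.append_assoc, List.take_append_of_le_length hx₂, prePush, List.take_append,
    List.take_of_length_le hx₁, List.take_replicate, excess_append, excess_replicate_false,
    excess_runStack_snd, min_eq_left (by rw [length_prePush] at hx₂; omega)]
  push_cast [hx₁]
  ring

lemma exists_pop_block {a b x : ℕ} (hab : a ≤ b) (hx₁ : (runStack A a).2.length ≤ x)
    (hx₂ : x ≤ (prePush A b).length) :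
    ∃ m, a ≤ m ∧ m ≤ b ∧ (runStack A m).2.length ≤ x ∧ x ≤ (prePush A m).length := by
  induction b, hab using Nat.le_induction with
  | base => exact ⟨a, le_rfl, le_rfl, hx₁, hx₂⟩
  | succ b hab ih =>
    by_cases hxb : x ≤ (prePush A b).length
    · obtain ⟨m, ham, hmb, hm⟩ := ih hxb
      exact ⟨m, ham, hmb.trans b.le_succ, hm⟩
    · refine ⟨b + 1, hab.trans b.le_succ, le_rfl, ?_, hx₂⟩
      simp only [runStack_snd_succ, List.length_append, List.length_singleton]
      omega

end Stack

lemma dropWhile_append_cons_of_not {α : Type*} {p : α → Bool} {y : α} (hy : ¬ p y)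
    (u r : List α) : ∃ u', (u ++ y :: r).dropWhile p = u' ++ y :: r ∧ u' <:+ u := by
  rw [List.dropWhile_append]
  split
  · exact ⟨[], by simp [hy], List.nil_suffix⟩
  · exact ⟨_, rfl, List.dropWhile_suffix _⟩

section Interval

variable {A : ℕ → ℕ} {i : ℕ}

lemma runStack_fst_eq_append {m : ℕ} (hi : i < m) (hge : ∀ k, i < k → k < m → A i ≤ A k) :
    ∃ u, (runStack A m).1 = u ++ (runStack A (i + 1)).1 ∧ ∀ y ∈ u, A i ≤ y := by
  induction m, hi using Nat.le_induction with
  | base => exact ⟨[], rfl, by simp⟩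
  | succ m hm ih =>
    obtain ⟨u, hu, huA⟩ := ih fun k hik hkm => hge k hik (by omega)
    have him : A i ≤ A m := hge m (by omega) (by omega)
    obtain ⟨u', hu', hsuf⟩ := dropWhile_append_cons_of_not
      (p := fun y => A m < y) (by simpa using him) u ((runStack A i).1.dropWhile _)
    refine ⟨A m :: u', ?_, ?_⟩
    · rw [runStack_fst_succ, hu, runStack_fst_succ, hu', List.cons_append]
    · simp only [List.mem_cons, forall_eq_or_imp]
      exact ⟨him, fun y hy => huA y (hsuf.subset hy)⟩

lemma length_runStack_fst_succ_le {p : ℕ} (hip : i < p) (hge : ∀ k, i < k → k < p → A i ≤ A k) :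
    (runStack A (i + 1)).1.length ≤ (runStack A p).1.length := by
  obtain ⟨u, hu, -⟩ := runStack_fst_eq_append hip hge
  simp [hu]

lemma length_runStack_fst_le_length_dropWhile {m : ℕ} (hi : i < m)
    (hge : ∀ k, i < k → k ≤ m → A i ≤ A k) :
    (runStack A (i + 1)).1.length ≤ ((runStack A m).1.dropWhile (fun y => A m < y)).length := by
  obtain ⟨u, hu, -⟩ := runStack_fst_eq_append hi fun k hik hkm => hge k hik hkm.le
  obtain ⟨u', hu', -⟩ := dropWhile_append_cons_of_not
    (p := fun y => A m < y) (by simpa using hge m hi le_rfl) u ((runStack A i).1.dropWhile _)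
  rw [hu, runStack_fst_succ, hu', List.length_append]
  omega

lemma length_dropWhile_lt_length_runStack_fst {p : ℕ} (hip : i < p) (hlt : A p < A i)
    (hge : ∀ k, i < k → k < p → A i ≤ A k) :
    ((runStack A p).1.dropWhile (fun y => A p < y)).length < (runStack A (i + 1)).1.length := by
  obtain ⟨u, hu, huA⟩ := runStack_fst_eq_append hip hge
  rw [hu, List.dropWhile_append_of_pos (by simpa using fun y hy => hlt.trans_le (huA y hy)),
    runStack_fst_succ, List.dropWhile_cons_of_pos (by simpa using hlt), List.length_cons]
  exact Nat.lt_succ_of_le (List.dropWhile_suffix _).length_le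

end Interval

section Positions

variable {A : ℕ → ℕ} {n : ℕ}

lemma openPos_bpString {j : ℕ} (hj : j < n) : openPos (bpString A n) j = (prePush A j).length := by
  obtain ⟨t, ht⟩ := prePush_append_true_prefix_bpString A hj
  refine openPos_eq ?_ ?_ ?_ <;> rw [← ht]
  · simp
  · simp
  · rw [List.append_assoc, List.take_left' rfl, prePush, List.count_append,
      count_true_runStack_snd]
    simp [List.count_replicate]

lemma getD_bpString_of_lt_popCount {p d : ℕ} (hp : p < n) (hd : d < popCount A p) :
    (bpString A n).getD ((runStack A p).2.length + d) false = false := by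
  obtain ⟨t, ht⟩ := prePush_append_true_prefix_bpString A hp
  rw [← ht, prePush, List.append_assoc, List.append_assoc,
    List.getD_append_right _ _ _ _ (Nat.le_add_right _ _), Nat.add_sub_cancel_left,
    List.getD_append _ _ _ _ (by simpa using hd)]
  exact List.getD_replicate (x := false) hd

lemma excess_take_prePush_bpString {i : ℕ} (hi : i < n) :
    excess ((bpString A n).take (prePush A i).length) = (runStack A (i + 1)).1.length - 1 := by
  have := length_dropWhile_add_popCount A i
  rw [excess_take_bpString A hi (by simp [length_prePush]) le_rfl, length_prePush,
    runStack_fst_succ, List.length_cons]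
  omega

lemma closePos_bpString {i p : ℕ} (hip : i < p) (hpn : p < n) (hlt : A p < A i)
    (hge : ∀ k, i < k → k < p → A i ≤ A k) :
    closePos (bpString A n) i = (runStack A p).2.length +
      ((runStack A p).1.length - (runStack A (i + 1)).1.length) := by
  have hpop_p := length_dropWhile_add_popCount A p
  have hdrop_p := length_dropWhile_lt_length_runStack_fst hip hlt hge
  have hLip := length_runStack_fst_succ_le hip hge
  have hOi : (runStack A (i + 1)).2.length = (prePush A i).length + 1 := by
    simp [runStack_snd_succ]
  have hOip : (runStack A (i + 1)).2.length ≤ (runStack A p).2.length :=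
    (runStack_snd_prefix A hip).length_le
  have hopen := openPos_bpString (A := A) (hip.trans hpn)
  have hS := (prePush_append_true_prefix_bpString A hpn).length_le
  have hprePush_p := length_prePush A p
  have hexo := excess_take_prePush_bpString (A := A) (hip.trans hpn)
  rw [List.length_append, List.length_singleton] at hS
  refine closePos_eq (by omega) (by omega) (getD_bpString_of_lt_popCount hpn ?_) ?_ ?_
  · omega
  · rw [excess_take_bpString A hpn (by omega) (by omega), hopen, hexo]
    omega
  · rw [hopen]
    intro x hox hxc
    obtain ⟨m, him, hmp, hx₁, hx₂⟩ :=
      exists_pop_block A (a := i + 1) (b := p) (x := x + 1) hip (by omega) (by omega)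
    rw [excess_take_bpString A (hmp.trans_lt hpn) hx₁ hx₂, hexo]
    rcases hmp.lt_or_eq with hmp | rfl
    · have := length_runStack_fst_le_length_dropWhile (m := m) (by omega)
        fun k hik hkm => hge k hik (by omega)
      have := length_dropWhile_add_popCount A m
      have := length_prePush A m
      omega
    · omega

lemma closePos_sub_openPos_bpString {i p : ℕ} (hip : i < p) (hpn : p < n) (hlt : A p < A i)
    (hge : ∀ k, i < k → k < p → A i ≤ A k) :
    closePos (bpString A n) i - openPos (bpString A n) i + 1 = 2 * (p - i) := by
  have hOi : (runStack A (i + 1)).2.length = (prePush A i).length + 1 := by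
    simp [runStack_snd_succ]
  have hLip := length_runStack_fst_succ_le hip hge
  have hp := length_runStack_snd_add A p
  have hi := length_runStack_snd_add A (i + 1)
  rw [closePos_bpString hip hpn hlt hge, openPos_bpString (hip.trans hpn)]
  omega

lemma closePos_bpString_last (hn : 0 < n) :
    closePos (bpString A n) (n - 1) = openPos (bpString A n) (n - 1) + 1 := by
  have hS : bpString A n = prePush A (n - 1) ++ [true, false] := by
    rw [bpString, ← Nat.sub_add_cancel hn, runStack_snd_succ, List.append_assoc]
    rfl
  have hopen := openPos_bpString (A := A) (Nat.sub_lt hn one_pos)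
  refine closePos_eq (by omega) ?_ ?_ ?_ (fun x h₁ h₂ => by omega) <;> rw [hopen, hS]
  · simp
  · simp
  · rw [List.take_left' rfl, List.take_of_length_le (by simp), excess_append,
      show excess [true, false] = 0 from rfl, add_zero]

end Positions

lemma nextSmaller_spec {A : ℕ → ℕ} {n i p : ℕ}
    (hp : sInf ({n} ∪ {j | i < j ∧ j < n ∧ A j < A i} : Set ℕ) = p)
    (hex : ∃ j, i < j ∧ j < n ∧ A j < A i) :
    i < p ∧ p < n ∧ A p < A i ∧ ∀ k, i < k → k < p → A i ≤ A k := by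
  obtain ⟨j, hj⟩ := hex
  have hjmem : j ∈ ({n} ∪ {j | i < j ∧ j < n ∧ A j < A i} : Set ℕ) := Or.inr hj
  have hpj : p ≤ j := hp ▸ Nat.sInf_le hjmem
  obtain hpn | ⟨hip, hpn, hlt⟩ := hp ▸ Nat.sInf_mem ⟨j, hjmem⟩
  · rw [Set.mem_singleton_iff.1 hpn] at hpj
    omega
  refine ⟨hip, hpn, hlt, fun k hik hkp => not_lt.1 fun hk => ?_⟩
  exact Nat.notMem_of_lt_sInf (hp ▸ hkp) (Or.inr ⟨hik, by omega, hk⟩)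

end MonotoneStack

theorem bpString_encodes_nsv_general (n : ℕ) (hpos : 0 < n) (A : ℕ → ℕ)
    (hinj : ∀ i < n, ∀ j < n, A i = A j → i = j)
    (hmin : A (n - 1) = 0) :
    (∀ i, i + 1 < n →
      (closePos (bpString A n) i - openPos (bpString A n) i + 1) / 2 =
        sInf ({n} ∪ {j | i < j ∧ j < n ∧ A j < A i} : Set ℕ) - i) ∧
    (closePos (bpString A n) (n - 1) - openPos (bpString A n) (n - 1) + 1) / 2 = 1 := by
  refine ⟨fun i hi => ?_, by rw [MonotoneStack.closePos_bpString_last hpos]; omega⟩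
  have hlast : A (n - 1) < A i := by
    rw [hmin, Nat.pos_iff_ne_zero]
    intro h
    have := hinj i (by omega) (n - 1) (by omega) (h.trans hmin.symm)
    omega
  generalize hp : sInf ({n} ∪ {j | i < j ∧ j < n ∧ A j < A i} : Set ℕ) = p
  obtain ⟨hip, hpn, hlt, hge⟩ :=
    MonotoneStack.nextSmaller_spec hp ⟨n - 1, by omega, by omega, hlast⟩
  rw [MonotoneStack.closePos_sub_openPos_bpString hip hpn hlt hge]
  omega

/-- Lemma (bp): in the balanced parenthesis string produced by the monotone-stack
algorithm from `A`, letting `o_i`/`c_i` be the positions of the `(i+1)`-th open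
parenthesis and of its matching closed parenthesis, `(c_i - o_i + 1)/2` equals
`NSV_A[i] - i` for `i < n-1`, and equals `1` for the last position. (0-indexed;
the default NSV value is `n`.) -/
theorem bpString_encodes_nsv (n : ℕ) (hpos : 0 < n) (A : ℕ → ℕ)
    (hlt : ∀ i < n, A i < n)
    (hinj : ∀ i < n, ∀ j < n, A i = A j → i = j)
    (hmin : A (n - 1) = 0) :
    (∀ i, i + 1 < n →
      (closePos (bpString A n) i - openPos (bpString A n) i + 1) / 2 =
        sInf ({n} ∪ {j | i < j ∧ j < n ∧ A j < A i} : Set ℕ) - i) ∧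
    (closePos (bpString A n) (n - 1) - openPos (bpString A n) (n - 1) + 1) / 2 = 1 :=
  bpString_encodes_nsv_general n hpos A hinj hmin
end

section
/- Let T be a string of length n with unique minimal sentinel, and define the BWT string L by L[i] = T[SA[i] − 1] if SA[i] ≠ 1 and L[i] = T[n] otherwise. Define LF as the map sending i to ISA[SA[i] − 1] (with LF(ISA[1]) = 1). Then the right-to-left decoding pos_0 = 1, T'[n] = sentinel, and for i = n−1 down to 1: T'[i] = L[pos], pos ← LF(pos), reconstructs T exactly: T' = T. -/
/-!
The suffix starting at the sentinel is the smallest suffix, so it has rank `0`. Since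
`SA (ISA (m + 1)) = m + 1`, the LF-mapping sends the rank of suffix `m + 1` to the rank of
suffix `m`, so `n - 2 - i` steps from rank `0` reach the rank of suffix `i + 1`, where the
BWT letter is `T[i]`.
-/

theorem List.drop_lt_drop_of_getElem_lt {α : Type*} [LT α] {l : List α} {i j : ℕ}
    (hi : i < l.length) (hj : j < l.length) (h : l[i] < l[j]) : l.drop i < l.drop j := by
  rw [List.drop_eq_getElem_cons hi, List.drop_eq_getElem_cons hj]
  exact List.Lex.rel h

theorem Function.iterate_apply_eq_sub_of_apply_succ {β : Type*} {f : β → β} {g : ℕ → β}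
    {p : ℕ} (h : ∀ m < p, f (g (m + 1)) = g m) : ∀ k ≤ p, f^[k] (g p) = g (p - k) := by
  intro k
  induction k with
  | zero => simp
  | succ k ih =>
    intro hk
    rw [Function.iterate_succ_apply', ih (by omega), ← h (p - (k + 1)) (by omega)]
    congr 2
    omega

section SuffixArray

variable {α : Type*} {T : List α} {n : ℕ} {SA ISA : ℕ → ℕ}

theorem rank_sentinel_eq_zero [LinearOrder α] [Inhabited α] (hn : T.length = n) (hpos : 0 < n)
    (hsent : ∀ k, k + 1 < n → T[n - 1]! < T[k]!) (hSAlt : ∀ i < n, SA i < n)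
    (hinv1 : ∀ i < n, ISA (SA i) = i)
    (hord : ∀ i < n, ∀ j < n, (ISA i < ISA j ↔ T.drop i < T.drop j)) :
    ISA (n - 1) = 0 := by
  by_contra hne
  have hfirst : ISA (SA 0) = 0 := hinv1 0 hpos
  have hlast : SA 0 + 1 < n := by
    have := hSAlt 0 hpos
    have : SA 0 ≠ n - 1 := fun h => hne (h ▸ hfirst)
    omega
  have hdrop : T.drop (n - 1) < T.drop (SA 0) := by
    have := hsent (SA 0) hlast
    rw [getElem!_pos T (n - 1) (by omega), getElem!_pos T (SA 0) (by omega)] at this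
    exact List.drop_lt_drop_of_getElem_lt _ _ this
  have := (hord (n - 1) (by omega) (SA 0) (by omega)).mpr hdrop
  omega

theorem lf_rank_succ {LF : ℕ → ℕ} (hISAlt : ∀ i < n, ISA i < n)
    (hinv2 : ∀ i < n, SA (ISA i) = i)
    (hLF : ∀ i < n, LF i = if SA i = 0 then ISA (n - 1) else ISA (SA i - 1))
    {m : ℕ} (hm : m + 1 < n) : LF (ISA (m + 1)) = ISA m := by
  rw [hLF _ (hISAlt _ hm), hinv2 _ hm, if_neg m.succ_ne_zero, Nat.add_sub_cancel]

theorem bwt_rank_succ [Inhabited α] {L : ℕ → α} (hISAlt : ∀ i < n, ISA i < n)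
    (hinv2 : ∀ i < n, SA (ISA i) = i)
    (hL : ∀ i < n, L i = if SA i = 0 then T[n - 1]! else T[SA i - 1]!)
    {m : ℕ} (hm : m + 1 < n) : L (ISA (m + 1)) = T[m]! := by
  rw [hL _ (hISAlt _ hm), hinv2 _ hm, if_neg m.succ_ne_zero, Nat.add_sub_cancel]

end SuffixArray

/-- Correctness of Burrows-Wheeler inversion via the LF-mapping: decoding
right-to-left with `pos₀ = 0`, `T'[n-1] =` sentinel and `T'[i] = L[pos]`,
`pos ← LF pos` reconstructs `T`: for every `i` with `i + 1 < n`,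
`T[i] = L (LF^[n-2-i] 0)`. (0-indexed.) -/
theorem bwt_inversion_correct {α : Type*} [LinearOrder α] [Inhabited α]
    (T : List α) (n : ℕ) (hn : T.length = n) (hpos : 0 < n)
    (hsent : ∀ k, k + 1 < n → T[n - 1]! < T[k]!)
    (SA ISA LF : ℕ → ℕ) (L : ℕ → α)
    (hSAlt : ∀ i < n, SA i < n) (hISAlt : ∀ i < n, ISA i < n)
    (hinv1 : ∀ i < n, ISA (SA i) = i) (hinv2 : ∀ i < n, SA (ISA i) = i)
    (hord : ∀ i < n, ∀ j < n, (ISA i < ISA j ↔ T.drop i < T.drop j))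
    (hL : ∀ i < n, L i = if SA i = 0 then T[n - 1]! else T[SA i - 1]!)
    (hLF : ∀ i < n, LF i = if SA i = 0 then ISA (n - 1) else ISA (SA i - 1)) :
    ∀ i, i + 1 < n → T[i]! = L (LF^[n - 2 - i] 0) := by
  intro i hi
  have hstart : ISA (n - 1) = 0 := rank_sentinel_eq_zero hn hpos hsent hSAlt hinv1 hord
  have hwalk : LF^[n - 2 - i] 0 = ISA (i + 1) := by
    rw [← hstart, Function.iterate_apply_eq_sub_of_apply_succ
      (fun m hm => lf_rank_succ hISAlt hinv2 hLF (by omega)) _ (by omega)]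
    congr 1
    omega
  rw [hwalk, bwt_rank_succ hISAlt hinv2 hL hi]
end

section
/- Let A[1..n] be a permutation of {1,...,n} with A[n] = 1, and let S be the length-2n balanced parenthesis string produced by the monotone-stack algorithm. Then the open parenthesis written at step j lies strictly between the open parenthesis of step i and its matching closed parenthesis if and only if i < j < NSV_A[i], where NSV_A[i] = min({n+1} ∪ {k : i < k ≤ n, A[k] < A[i]}). Consequently the number of parenthesis pairs nested directly inside pair i at top level counts positions in the interval (i, NSV_A[i]). -/
theorem List.dropWhile_append_cons_of_not {α : Type*} {p : α → Bool} (t s : List α) {a : α}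
    (ha : p a = false) : (t ++ a :: s).dropWhile p = t.dropWhile p ++ a :: s := by
  rw [List.dropWhile_append]
  split_ifs with h
  · simp [List.isEmpty_iff.mp h, ha]
  · rfl

theorem exists_apply_le_and_lt_apply_succ (f : ℕ → ℕ) {a b p : ℕ} (hab : a ≤ b)
    (ha : f a ≤ p) (hb : p < f b) : ∃ l, a ≤ l ∧ l < b ∧ f l ≤ p ∧ p < f (l + 1) := by
  induction b, hab using Nat.le_induction with
  | base => omega
  | succ b hab ih =>
    by_cases h : p < f b
    · obtain ⟨l, hal, hlb, hl⟩ := ih h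
      exact ⟨l, hal, by omega, hl⟩
    · exact ⟨b, hab, by omega, by omega, hb⟩

def excess (S : List Bool) (p : ℕ) : ℤ :=
  2 * (S.take p).count true - p

theorem count_true_take_succ_of_getD {S : List Bool} {p : ℕ} (hp : p < S.length)
    (ht : S.getD p false = true) : (S.take (p + 1)).count true = (S.take p).count true + 1 := by
  rw [List.getD_eq_getElem _ _ hp] at ht
  simp [List.take_add_one, List.getElem?_eq_getElem hp, ht]

theorem openPos_eq {S : List Bool} {i q : ℕ} (hq : q < S.length) (ht : S.getD q false = true)
    (hcount : (S.take q).count true = i) : openPos S i = q := by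
  refine IsLeast.csInf_eq ⟨⟨hq, ht, hcount⟩, fun p ⟨hp, hpt, hpc⟩ => ?_⟩
  by_contra! hqp
  have hsucc := count_true_take_succ_of_getD hp hpt
  have hmono := (List.take_prefix_take_left (l := S) (show p + 1 ≤ q by omega)).count_le true
  omega

theorem count_true_eq_count_false_iff_excess_eq {S : List Bool} {o c : ℕ} (hoc : o ≤ c)
    (hc : c < S.length) :
    ((S.take (c + 1)).drop o).count true = ((S.take (c + 1)).drop o).count false ↔
      excess S (c + 1) = excess S o := by
  have hsplit := congrArg (List.count true) (List.take_append_drop o (S.take (c + 1)))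
  have hdrop := List.count_true_add_count_false ((S.take (c + 1)).drop o)
  rw [List.count_append, List.take_take, min_eq_left (by omega)] at hsplit
  simp only [List.length_drop, List.length_take] at hdrop
  unfold excess
  omega

theorem closePos_eq_of_excess {S : List Bool} {i c : ℕ} (hoc : openPos S i < c)
    (hc : c < S.length) (hfalse : S.getD c false = false)
    (hret : excess S (c + 1) = excess S (openPos S i))
    (habove : ∀ p, openPos S i < p → p ≤ c → excess S (openPos S i) < excess S p) :
    closePos S i = c := by
  refine IsLeast.csInf_eq ⟨⟨hoc, hc, hfalse, ?_⟩, fun c' ⟨hoc', hc', _, hbal'⟩ => ?_⟩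
  · exact (count_true_eq_count_false_iff_excess_eq hoc.le hc).2 hret
  · rw [count_true_eq_count_false_iff_excess_eq hoc'.le hc'] at hbal'
    by_contra! hc'c
    exact (habove (c' + 1) (by omega) hc'c).ne' hbal'

section MonotoneStack

variable (A : ℕ → ℕ)

theorem popGT_eq (x : ℕ) (s : List ℕ) :
    popGT x s = (s.dropWhile (fun y => x < y),
      List.replicate (s.takeWhile (fun y => x < y)).length false) := by
  induction s with
  | nil => rfl
  | cons y s ih => by_cases h : x < y <;> simp [popGT, h, ih, List.replicate_succ]

def popCount (i : ℕ) : ℕ :=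
  ((runStack A i).1.takeWhile (fun y => A i < y)).length

theorem runStack_succ_fst (i : ℕ) :
    (runStack A (i + 1)).1 = A i :: (runStack A i).1.dropWhile (fun y => A i < y) := by
  simp [runStack, popGT_eq]

theorem runStack_succ_snd (i : ℕ) :
    (runStack A (i + 1)).2 = (runStack A i).2 ++ List.replicate (popCount A i) false ++ [true] := by
  simp [runStack, popGT_eq, popCount]

theorem length_runStack_snd_succ (i : ℕ) :
    (runStack A (i + 1)).2.length = (runStack A i).2.length + popCount A i + 1 := by
  simp [runStack_succ_snd, Nat.add_assoc]

theorem popCount_add_length_dropWhile (i : ℕ) :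
    popCount A i + ((runStack A i).1.dropWhile (fun y => A i < y)).length =
      (runStack A i).1.length := by
  rw [popCount, ← List.length_append, List.takeWhile_append_dropWhile]

theorem length_runStack_fst_succ (i : ℕ) :
    (runStack A (i + 1)).1.length + popCount A i = (runStack A i).1.length + 1 := by
  have := popCount_add_length_dropWhile A i
  rw [runStack_succ_fst, List.length_cons]
  omega

theorem count_true_runStack_snd (i : ℕ) : (runStack A i).2.count true = i := by
  induction i with
  | zero => rfl
  | succ i ih => simp [runStack_succ_snd, List.count_replicate, ih]

theorem length_runStack_snd_add_length_fst (i : ℕ) :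
    (runStack A i).2.length + (runStack A i).1.length = 2 * i := by
  induction i with
  | zero => rfl
  | succ i ih =>
    have := length_runStack_fst_succ A i
    rw [length_runStack_snd_succ]
    omega

theorem strictMono_length_runStack_snd : StrictMono fun i => (runStack A i).2.length :=
  strictMono_nat_of_lt_succ fun i => by rw [length_runStack_snd_succ]; omega

theorem runStack_snd_prefix {i j : ℕ} (hij : i ≤ j) : (runStack A i).2 <+: (runStack A j).2 := by
  induction j, hij using Nat.le_induction with
  | base => exact List.prefix_refl _
  | succ j _ ih => exact ih.trans ⟨_, by rw [runStack_succ_snd, List.append_assoc]⟩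

theorem length_bpString (n : ℕ) : (bpString A n).length = (runStack A n).2.length + 1 := by
  simp [bpString]

theorem bpString_eq_append {n l : ℕ} (hl : l < n) :
    ∃ rest, bpString A n =
      (runStack A l).2 ++ List.replicate (popCount A l) false ++ true :: rest := by
  obtain ⟨rest, hrest⟩ := runStack_snd_prefix A (show l + 1 ≤ n from hl)
  exact ⟨rest ++ [false], by simp [bpString, ← hrest, runStack_succ_snd]⟩

theorem take_bpString {n l r : ℕ} (hl : l < n) (hr : r ≤ popCount A l) :
    (bpString A n).take ((runStack A l).2.length + r) =
      (runStack A l).2 ++ List.replicate r false := by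
  obtain ⟨rest, hS⟩ := bpString_eq_append A hl
  rw [hS, List.append_assoc, List.take_length_add_append,
    List.take_append_of_le_length (by simpa using hr), List.take_replicate, min_eq_left hr]

theorem getD_bpString {n l r : ℕ} (hl : l < n) (hr : r ≤ popCount A l) :
    (bpString A n).getD ((runStack A l).2.length + r) false = decide (r = popCount A l) := by
  obtain ⟨rest, hS⟩ := bpString_eq_append A hl
  rw [hS, List.append_assoc, List.getD_eq_getElem?_getD, List.getElem?_append_right (by omega),
    Nat.add_sub_cancel_left]
  rcases hr.lt_or_eq with hr | rfl
  · simp [List.getElem?_append_left, hr, hr.ne]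
  · simp

theorem excess_bpString {n l r : ℕ} (hl : l < n) (hr : r ≤ popCount A l) :
    excess (bpString A n) ((runStack A l).2.length + r) = (runStack A l).1.length - r := by
  have := length_runStack_snd_add_length_fst A l
  rw [excess, take_bpString A hl hr]
  simp [List.count_replicate, count_true_runStack_snd]
  omega

theorem openPos_bpString {n i : ℕ} (hi : i < n) :
    openPos (bpString A n) i = (runStack A i).2.length + popCount A i := by
  have hL := (strictMono_length_runStack_snd A).monotone (show i + 1 ≤ n from hi)
  have := length_runStack_snd_succ A i
  apply openPos_eq
  · rw [length_bpString]; omega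
  · simpa using getD_bpString A hi le_rfl
  · simp [take_bpString A hi le_rfl, List.count_replicate, count_true_runStack_snd]

theorem openPos_bpString_lt_iff {n i j : ℕ} (hi : i < n) (hj : j < n) :
    openPos (bpString A n) i < openPos (bpString A n) j ↔ i < j := by
  rw [openPos_bpString A hi, openPos_bpString A hj, ← add_lt_add_iff_right 1,
    ← length_runStack_snd_succ, ← length_runStack_snd_succ,
    (strictMono_length_runStack_snd A).lt_iff_lt, add_lt_add_iff_right]

end MonotoneStack

section NearestSmallerValue

variable (A : ℕ → ℕ) {i m : ℕ}

theorem runStack_fst_eq_append {l : ℕ} (hil : i < l)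
    (hbetween : ∀ k, i < k → k < l → A i < A k) :
    ∃ t, (runStack A l).1 = t ++ (runStack A (i + 1)).1 ∧ ∀ x ∈ t, A i < x := by
  induction l, hil using Nat.le_induction with
  | base => exact ⟨[], rfl, by simp⟩
  | succ l hil ih =>
    obtain ⟨t, ht, htgt⟩ := ih fun k hik hkl => hbetween k hik (by omega)
    have hAl := hbetween l hil (by omega)
    refine ⟨A l :: t.dropWhile (fun y => A l < y), ?_, ?_⟩
    · rw [runStack_succ_fst, ht, runStack_succ_fst A i,
        List.dropWhile_append_cons_of_not _ _ (by simpa using hAl.le), List.cons_append]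
    · simp only [List.mem_cons]
      rintro x (rfl | hx)
      exacts [hAl, htgt x ((List.dropWhile_sublist _).subset hx)]

theorem popCount_add_length_le {l : ℕ} (hil : i < l)
    (hbetween : ∀ k, i < k → k ≤ l → A i < A k) :
    popCount A l + (runStack A (i + 1)).1.length ≤ (runStack A l).1.length := by
  obtain ⟨t, ht, -⟩ := runStack_fst_eq_append A hil fun k hik hkl => hbetween k hik hkl.le
  have hdrop : (runStack A l).1.dropWhile (fun y => A l < y) =
      t.dropWhile (fun y => A l < y) ++ (runStack A (i + 1)).1 := by
    rw [ht, runStack_succ_fst A i, List.dropWhile_append_cons_of_not _ _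
      (by simpa using (hbetween l hil le_rfl).le)]
  rw [← popCount_add_length_dropWhile A l, hdrop, List.length_append]
  omega

/-- At step `m`, the values stacked above `A i` and then `A i` itself are popped. -/
theorem exists_lt_popCount_of_nsv (him : i < m) (hAm : A m < A i)
    (hbetween : ∀ k, i < k → k < m → A i < A k) :
    ∃ d < popCount A m, (runStack A m).1.length = d + (runStack A (i + 1)).1.length := by
  obtain ⟨t, ht, htgt⟩ := runStack_fst_eq_append A him hbetween
  refine ⟨t.length, ?_, by simp [ht]⟩
  have hpop : ∀ x ∈ t ++ [A i], decide (A m < x) = true := by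
    simp only [List.mem_append, List.mem_singleton, decide_eq_true_eq]
    rintro x (hx | rfl)
    exacts [hAm.trans (htgt x hx), hAm]
  rw [popCount, ht, runStack_succ_fst A i, ← List.singleton_append, ← List.append_assoc,
    List.takeWhile_append_of_pos hpop]
  simp

theorem length_runStack_fst_le_excess_bpString {n p : ℕ} (hmn : m < n) (him : i < m)
    (hAm : A m < A i) (hbetween : ∀ k, i < k → k < m → A i < A k)
    (hp₁ : (runStack A (i + 1)).2.length ≤ p)
    (hp₂ : p + (runStack A (i + 1)).1.length ≤
      (runStack A m).2.length + (runStack A m).1.length) :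
    ((runStack A (i + 1)).1.length : ℤ) ≤ excess (bpString A n) p := by
  obtain ⟨d, hd, hlen⟩ := exists_lt_popCount_of_nsv A him hAm hbetween
  by_cases hpm : p < (runStack A m).2.length
  · obtain ⟨l, hil, hlm, hlp, hpl⟩ := exists_apply_le_and_lt_apply_succ
      (fun l => (runStack A l).2.length) him hp₁ hpm
    simp only [length_runStack_snd_succ] at hlp hpl
    have hpop := popCount_add_length_le A hil fun k hik hkl => hbetween k hik (by omega)
    have hexcess := excess_bpString A (hlm.trans hmn)
      (show p - (runStack A l).2.length ≤ popCount A l by omega)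
    rw [Nat.add_sub_cancel' hlp] at hexcess
    rw [hexcess]
    omega
  · have hexcess := excess_bpString A hmn
      (show p - (runStack A m).2.length ≤ popCount A m by omega)
    rw [Nat.add_sub_cancel' (not_lt.1 hpm)] at hexcess
    rw [hexcess]
    omega

theorem closePos_bpString {n : ℕ} (hmn : m < n) (him : i < m) (hAm : A m < A i)
    (hbetween : ∀ k, i < k → k < m → A i < A k) :
    ∃ d < popCount A m, closePos (bpString A n) i = (runStack A m).2.length + d := by
  obtain ⟨d, hd, hlen⟩ := exists_lt_popCount_of_nsv A him hAm hbetween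
  have hi : i < n := him.trans hmn
  have hopen := openPos_bpString A hi
  have hLi := length_runStack_snd_succ A i
  have hLm := length_runStack_snd_succ A m
  have hLim := (strictMono_length_runStack_snd A).monotone (show i + 1 ≤ m from him)
  have hLmn := (strictMono_length_runStack_snd A).monotone (show m + 1 ≤ n from hmn)
  have hstack := length_runStack_fst_succ A i
  have hexcess_open := excess_bpString A hi le_rfl
  refine ⟨d, hd, closePos_eq_of_excess ?_ ?_ ?_ ?_ ?_⟩
  · rw [hopen]
    omega
  · rw [length_bpString]
    omega
  · simpa [hd.ne] using getD_bpString A hmn hd.le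
  · rw [hopen, hexcess_open, add_assoc, excess_bpString A hmn hd]
    omega
  · intro p hop hpc
    rw [hopen] at hop ⊢
    rw [hexcess_open]
    have := length_runStack_fst_le_excess_bpString A hmn him hAm hbetween (p := p)
      (by omega) (by omega)
    omega

theorem openPos_lt_closePos_bpString_iff {n j : ℕ} (hmn : m < n) (him : i < m)
    (hAm : A m < A i) (hbetween : ∀ k, i < k → k < m → A i < A k) (hj : j < n) :
    openPos (bpString A n) j < closePos (bpString A n) i ↔ j < m := by
  obtain ⟨d, hd, hclose⟩ := closePos_bpString A hmn him hAm hbetween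
  rw [hclose, openPos_bpString A hj]
  have hLj := length_runStack_snd_succ A j
  have hLm := length_runStack_snd_succ A m
  have hmono := (strictMono_length_runStack_snd A).monotone
  constructor
  · intro h
    by_contra! hmj
    have := hmono (show m + 1 ≤ j + 1 by omega)
    simp only at this
    omega
  · intro hjm
    have := hmono (show j + 1 ≤ m from hjm)
    simp only at this
    omega

end NearestSmallerValue

noncomputable def nsv (A : ℕ → ℕ) (n i : ℕ) : ℕ :=
  sInf ({n} ∪ {k | i < k ∧ k < n ∧ A k < A i})

theorem nsv_spec {A : ℕ → ℕ} {n i k : ℕ} (hk : i < k ∧ k < n ∧ A k < A i) :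
    i < nsv A n i ∧ nsv A n i < n ∧ A (nsv A n i) < A i := by
  have hle : nsv A n i ≤ k := Nat.sInf_le (Or.inr hk)
  rcases Nat.sInf_mem (⟨n, Or.inl rfl⟩ : ({n} ∪ {k | i < k ∧ k < n ∧ A k < A i}).Nonempty) with
    h | h
  · rw [nsv, Set.mem_singleton_iff.1 h] at hle
    omega
  · exact h

theorem lt_of_lt_nsv {A : ℕ → ℕ} {n i k : ℕ} (hinj : ∀ i < n, ∀ j < n, A i = A j → i = j)
    (hik : i < k) (hk : k < nsv A n i) : A i < A k := by
  have hkn : k < n := hk.trans_le (Nat.sInf_le (Or.inl rfl))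
  have hnotmem := Nat.notMem_of_lt_sInf hk
  refine lt_of_le_of_ne (not_lt.1 fun hlt => hnotmem (Or.inr ⟨hik, hkn, hlt⟩)) fun heq => ?_
  exact hik.ne (hinj i (hik.trans hkn) k hkn heq)

theorem bpString_nesting_iff_nsv_general (n : ℕ) (A : ℕ → ℕ)
    (hinj : ∀ i < n, ∀ j < n, A i = A j → i = j)
    (hmin : A (n - 1) = 0) :
    ∀ i < n, ∀ j < n,
      (openPos (bpString A n) i < openPos (bpString A n) j ∧
        openPos (bpString A n) j < closePos (bpString A n) i) ↔
      (i < j ∧ j < sInf ({n} ∪ {k | i < k ∧ k < n ∧ A k < A i} : Set ℕ)) := by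
  intro i hi j hj
  rw [openPos_bpString_lt_iff A hi hj]
  by_cases hij : i < j
  · have hAi : A (n - 1) < A i := by
      rw [hmin, Nat.pos_iff_ne_zero]
      intro h0
      have := hinj i hi (n - 1) (by omega) (h0.trans hmin.symm)
      omega
    obtain ⟨him, hmn, hAm⟩ := nsv_spec (n := n) (k := n - 1) ⟨by omega, by omega, hAi⟩
    rw [openPos_lt_closePos_bpString_iff A hmn him hAm (fun k => lt_of_lt_nsv hinj) hj]
    rfl
  · simp [hij]

/-- Nesting characterization: in the balanced parenthesis string produced by the
monotone-stack algorithm from a permutation `A` with `A (n-1) = 0`, the open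
parenthesis written at step `j` lies strictly between the open parenthesis of
step `i` and its matching closed parenthesis iff `i < j < NSV_A[i]`.
(0-indexed; the default NSV value is `n`.) -/
theorem bpString_nesting_iff_nsv (n : ℕ) (hpos : 0 < n) (A : ℕ → ℕ)
    (hlt : ∀ i < n, A i < n)
    (hinj : ∀ i < n, ∀ j < n, A i = A j → i = j)
    (hmin : A (n - 1) = 0) :
    ∀ i < n, ∀ j < n,
      (openPos (bpString A n) i < openPos (bpString A n) j ∧
        openPos (bpString A n) j < closePos (bpString A n) i) ↔
      (i < j ∧ j < sInf ({n} ∪ {k | i < k ∧ k < n ∧ A k < A i} : Set ℕ)) :=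
  bpString_nesting_iff_nsv_general n A hinj hmin
end
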